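/- arXiv:1111.1589 — 6 statements merged into one kernel-verified Lean document; each statement's English description precedes it below -/
import Mathlib

section
/- Let N ≥ 1 and d ≥ 2 be integers and let α_0 ≤ α_1 ≤ ⋯ ≤ α_N be integers, not all zero, with α_0 + ⋯ + α_N = 0. Let D be a rational number such that D ≥ α_u + (d-1)·α_v for all integers u, v ≥ 0 with u + v = N. Then D ≥ -d(d-2)·α_0/(N(d-1)+1); in particular D ≥ 0, and if d ≥ 3 then D > 0. -/
/-!
Summing the constraints `α_u + (d-1) α_{N-u} ≤ D` over the interior indices `0 < u < N` and
using the symmetry `u ↔ N - u` bounds `d` times the interior sum `-α_0 - α_N` by `(N-1) D`.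
Adding `d` times the corner constraint `α_0 + (d-1) α_N ≤ D` to `d-1` times this bound
eliminates `α_N` and leaves `-d(d-2) α_0 ≤ (N(d-1)+1) D`. Since `α_0` is the least entry of a
nonzero sequence with zero sum, `α_0 < 0`, so the bound is nonnegative, and positive once `d ≥ 3`.
-/

open Finset

theorem apply_zero_neg_of_sum_range_eq_zero {M : Type*} [AddCommGroup M] [LinearOrder M]
    [IsOrderedAddMonoid M] {a : ℕ → M} {N : ℕ} (hmin : ∀ i ≤ N, a 0 ≤ a i)
    (hnz : ∃ i ≤ N, a i ≠ 0) (hsum : ∑ i ∈ range (N + 1), a i = 0) : a 0 < 0 := by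
  by_contra! h
  have hnonneg : ∀ i ∈ range (N + 1), 0 ≤ a i := fun i hi =>
    h.trans (hmin i (Nat.lt_succ_iff.mp (mem_range.mp hi)))
  obtain ⟨i, hi, hne⟩ := hnz
  exact hne ((sum_eq_zero_iff_of_nonneg hnonneg).mp hsum i (mem_range.mpr (Nat.lt_succ_of_le hi)))

section Field

variable {K : Type*} [Field K] [LinearOrder K] [IsStrictOrderedRing K]

theorem one_add_mul_sum_Ico_le {a : ℕ → K} {N : ℕ} {c D : K}
    (hD : ∀ u v : ℕ, u + v = N → a u + c * a v ≤ D) :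
    (1 + c) * ∑ u ∈ Ico 1 N, a u ≤ ((N - 1 : ℕ) : K) * D := by
  have h := sum_le_card_nsmul (Ico 1 N) (fun u => a u + c * a (N - u)) D fun u hu =>
    hD u (N - u) (by simp only [mem_Ico] at hu; omega)
  rw [sum_add_distrib, ← mul_sum, sum_Ico_reflect a 1 (by omega), Nat.card_Ico,
    nsmul_eq_mul] at h
  rwa [Nat.add_sub_cancel_left, Nat.add_sub_cancel, ← one_add_mul] at h

theorem neg_mul_sub_two_mul_le {a : ℕ → K} {N : ℕ} (hN : 1 ≤ N) {d D : K} (hd : 1 ≤ d)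
    (hsum : ∑ i ∈ range (N + 1), a i = 0)
    (hD : ∀ u v : ℕ, u + v = N → a u + (d - 1) * a v ≤ D) :
    -(d * (d - 2) * a 0) ≤ D * (N * (d - 1) + 1) := by
  have hinterior : ∑ u ∈ Ico 1 N, a u = -a 0 - a N := by
    rw [sum_range_eq_add_Ico _ N.succ_pos, sum_Ico_succ_top hN] at hsum
    linear_combination hsum
  have interior := one_add_mul_sum_Ico_le hD
  rw [hinterior, Nat.cast_sub hN, Nat.cast_one, add_sub_cancel] at interior
  have corner := hD 0 N (zero_add N)
  linear_combination mul_le_mul_of_nonneg_left corner (by linarith : (0 : K) ≤ d) +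
    mul_le_mul_of_nonneg_left interior (by linarith : (0 : K) ≤ d - 1)

end Field

theorem stmt2 (N d : ℕ) (hN : 1 ≤ N) (hd : 2 ≤ d)
    (α : ℕ → ℤ) (hmono : ∀ i j, i ≤ j → j ≤ N → α i ≤ α j)
    (hnz : ∃ i ≤ N, α i ≠ 0)
    (hsum : ∑ i ∈ Finset.range (N + 1), α i = 0)
    (D : ℚ)
    (hD : ∀ u v : ℕ, u + v = N → ((α u : ℚ) + ((d : ℚ) - 1) * (α v : ℚ)) ≤ D) :
    -((d : ℚ) * ((d : ℚ) - 2) * (α 0 : ℚ)) / ((N : ℚ) * ((d : ℚ) - 1) + 1) ≤ D ∧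
      0 ≤ D ∧ (3 ≤ d → 0 < D) := by
  have hα0 : (α 0 : ℚ) < 0 := by
    exact_mod_cast
      apply_zero_neg_of_sum_range_eq_zero (fun i hi => hmono 0 i i.zero_le hi) hnz hsum
  have hdQ : (2 : ℚ) ≤ d := by exact_mod_cast hd
  have hden : 0 < (N : ℚ) * ((d : ℚ) - 1) + 1 := by
    have : (0 : ℚ) ≤ N * ((d : ℚ) - 1) := mul_nonneg N.cast_nonneg (by linarith)
    linarith
  have hbound := (div_le_iff₀ hden).2 <|
    neg_mul_sub_two_mul_le hN (by linarith) (by exact_mod_cast hsum) hD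
  refine ⟨hbound, (div_nonneg ?_ hden.le).trans hbound,
    fun h3 => (div_pos ?_ hden).trans_le hbound⟩
  · exact neg_nonneg.2 (mul_nonpos_of_nonneg_of_nonpos (by nlinarith) hα0.le)
  · have hdQ3 : (3 : ℚ) ≤ d := by exact_mod_cast h3
    exact neg_pos.2 (mul_neg_of_pos_of_neg (by nlinarith) hα0)
end

section
/- Let N ≥ 1, d ≥ 2 be integers and α_0 ≤ ⋯ ≤ α_N integers, not all zero, summing to 0. Let D be an integer with D ≥ d·α_0. Define s* to be the smallest s ∈ {-1, 0, …, N-1} such that D ≥ α_u + (d-1)·α_v for all integers u, v ≥ 0 with u + v = N - s - 1. Then s* is well defined (the defining set is nonempty). Moreover, if 0 ≤ s ≤ s*, then there exists a largest integer v_s ∈ {0, …, N-s} with D < α_{N - s - v_s} + (d-1)·α_{v_s}; this v_s satisfies 2·v_s ≥ N + s* - 2s; and if 0 < s ≤ s* then v_{s-1} ≥ v_s + 1. -/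
/-!
Call level `k` bounded when `α u + (d - 1) α v ≤ D` for all `u + v = k`; level `0` is bounded
because `D ≥ d α₀`, and `s* = N - 1 - K` for the largest bounded level `K ≤ N`. For `s ≤ s*` the
level `N - s` is unbounded, so some `v` has an excess `D < α (N - s - v) + (d - 1) α v`, and `v_s`
is the largest one. Since `d - 1 ≥ 1`, swapping the two indices of a pair towards a larger second
index only increases the sum, so `U := N - s - v_s ≤ v_s`. By maximality of `v_s` the pairs
`(w, N - s - w)` with `w < U` have no excess, and monotonicity spreads this to every pair at level
`2U - 1`; hence `2U - 1 ≤ K`, which is the bound on `v_s`. Raising the second index of the pair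
`(U, v_s)` by one keeps its excess, so `v_{s-1} ≥ v_s + 1`.
-/

namespace PairBound

variable (α : ℕ → ℤ) (c D : ℤ)

def BoundedAt (k : ℕ) : Prop :=
  ∀ u v : ℕ, u + v = k → α u + c * α v ≤ D

-- `Excess α (d - 1) D (N - s) v` is the condition `D < α_{N-s-v} + (d-1) α_v` defining `v_s`.
def Excess (m v : ℕ) : Prop :=
  D < α (m - v) + c * α v

open Classical in
noncomputable def maxBoundedLevel (N : ℕ) : ℕ :=
  Nat.findGreatest (BoundedAt α c D) N

open Classical in
noncomputable def maxExcess (m : ℕ) : ℕ :=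
  Nat.findGreatest (Excess α c D m) m

variable {α c D}

lemma boundedAt_zero (hD : (1 + c) * α 0 ≤ D) : BoundedAt α c D 0 := by
  intro u v huv
  obtain ⟨rfl, rfl⟩ : u = 0 ∧ v = 0 := by omega
  linarith

lemma exists_excess_of_not_boundedAt {m : ℕ} (h : ¬ BoundedAt α c D m) :
    ∃ v ≤ m, Excess α c D m v := by
  simp only [BoundedAt, not_forall, not_le] at h
  obtain ⟨u, v, huv, hlt⟩ := h
  refine ⟨v, by omega, ?_⟩
  rwa [Excess, show m - v = u by omega]

lemma boundedAt_maxBoundedLevel (hD : (1 + c) * α 0 ≤ D) (N : ℕ) :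
    BoundedAt α c D (maxBoundedLevel α c D N) := by
  classical
  exact Nat.findGreatest_spec (Nat.zero_le N) (boundedAt_zero hD)

lemma le_maxBoundedLevel {k N : ℕ} (hkN : k ≤ N) (hk : BoundedAt α c D k) :
    k ≤ maxBoundedLevel α c D N := by
  classical
  exact Nat.le_findGreatest hkN hk

lemma maxBoundedLevel_le (N : ℕ) : maxBoundedLevel α c D N ≤ N := by
  classical
  exact Nat.findGreatest_le N

lemma maxExcess_le (m : ℕ) : maxExcess α c D m ≤ m := by
  classical
  exact Nat.findGreatest_le m

lemma le_maxExcess {m v : ℕ} (hvm : v ≤ m) (hv : Excess α c D m v) :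
    v ≤ maxExcess α c D m := by
  classical
  exact Nat.le_findGreatest hvm hv

lemma excess_maxExcess {m v : ℕ} (hvm : v ≤ m) (hv : Excess α c D m v) :
    Excess α c D m (maxExcess α c D m) := by
  classical
  exact Nat.findGreatest_spec hvm hv

lemma excess_swap {m v : ℕ} (hα : MonotoneOn α (Set.Iic m)) (hc : 1 ≤ c) (hv : v ≤ m - v)
    (h : Excess α c D m v) : Excess α c D m (m - v) := by
  have hle : α v ≤ α (m - v) := hα (show v ≤ m by omega) (Nat.sub_le m v) hv
  have hmul := mul_le_mul_of_nonneg_left hle (sub_nonneg.mpr hc)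
  unfold Excess at h ⊢
  rw [show m - (m - v) = v by omega]
  linarith

lemma sub_maxExcess_le_maxExcess {m v : ℕ} (hα : MonotoneOn α (Set.Iic m)) (hc : 1 ≤ c)
    (hvm : v ≤ m) (hv : Excess α c D m v) : m - maxExcess α c D m ≤ maxExcess α c D m := by
  by_contra! hlt
  have := le_maxExcess (Nat.sub_le _ _)
    (excess_swap hα hc hlt.le (excess_maxExcess hvm hv))
  omega

/-- Every pair at level `2 (m - V) - 1` is dominated, via monotonicity, by a pair `(w, m - w)` with
`w < m - V`, which has no excess by the maximality of `V`. -/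
lemma boundedAt_two_mul_sub_one {m V : ℕ} (hα : MonotoneOn α (Set.Iic m)) (hc : 1 ≤ c)
    (hmax : ∀ w ≤ m, Excess α c D m w → w ≤ V) (hVm : V < m) (hV : m - V ≤ V) :
    BoundedAt α c D (2 * (m - V) - 1) := by
  have hsmall : ∀ w, w < m - V → α w + c * α (m - w) ≤ D := by
    intro w hw
    by_contra! h
    have := hmax (m - w) (by omega) (by rwa [Excess, show m - (m - w) = w by omega])
    omega
  intro u v huv
  rcases lt_or_ge u (m - V) with hu | hu
  · have hle : α v ≤ α (m - u) :=
      hα (show _ ≤ m by omega) (show _ ≤ m by omega) (by omega)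
    have := mul_le_mul_of_nonneg_left hle (by linarith : (0 : ℤ) ≤ c)
    linarith [hsmall u hu]
  · have hv : v < m - V := by omega
    have hle₁ : α u ≤ α (m - v) :=
      hα (show _ ≤ m by omega) (show _ ≤ m by omega) (by omega)
    have hle₂ : α v ≤ α u :=
      hα (show _ ≤ m by omega) (show _ ≤ m by omega) (by omega)
    have := mul_le_mul_of_nonneg_left hle₁ (by linarith : (0 : ℤ) ≤ c)
    have := mul_le_mul_of_nonneg_left hle₂ (sub_nonneg.mpr hc)
    linarith [hsmall v hv]

lemma two_mul_sub_maxExcess_le {N m v : ℕ} (hmN : m ≤ N) (hα : MonotoneOn α (Set.Iic m))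
    (hc : 1 ≤ c) (hvm : v ≤ m) (hv : Excess α c D m v) :
    2 * (m - maxExcess α c D m) ≤ maxBoundedLevel α c D N + 1 := by
  have hV := sub_maxExcess_le_maxExcess hα hc hvm hv
  rcases (maxExcess_le (α := α) (c := c) (D := D) m).lt_or_eq with hVm | hVm
  · have := le_maxBoundedLevel (N := N) (by omega)
      (boundedAt_two_mul_sub_one hα hc (fun _ => le_maxExcess) hVm hV)
    omega
  · omega

lemma succ_maxExcess_le {m v : ℕ} (hα : MonotoneOn α (Set.Iic (m + 1))) (hc : 1 ≤ c)
    (hvm : v ≤ m) (hv : Excess α c D m v) :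
    maxExcess α c D m + 1 ≤ maxExcess α c D (m + 1) := by
  have hV := maxExcess_le (α := α) (c := c) (D := D) m
  have hle : α (maxExcess α c D m) ≤ α (maxExcess α c D m + 1) :=
    hα (show _ ≤ m + 1 by omega) (show _ ≤ m + 1 by omega) (Nat.le_succ _)
  have hmul := mul_le_mul_of_nonneg_left hle (by linarith : (0 : ℤ) ≤ c)
  have h := excess_maxExcess hvm hv
  refine le_maxExcess (by omega) ?_
  unfold Excess at h ⊢
  rw [show m + 1 - (maxExcess α c D m + 1) = m - maxExcess α c D m by omega]
  linarith

end PairBound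

open PairBound in
theorem stmt3_general (N d : ℕ) (hd : 2 ≤ d)
    (α : ℕ → ℤ) (hmono : ∀ i j, i ≤ j → j ≤ N → α i ≤ α j)
    (D : ℤ) (hD : (d : ℤ) * α 0 ≤ D) :
    ∃ sstar : ℤ,
      (-1 ≤ sstar ∧ sstar ≤ (N : ℤ) - 1 ∧
        (∀ u v : ℕ, (u : ℤ) + (v : ℤ) = (N : ℤ) - sstar - 1 →
          α u + ((d : ℤ) - 1) * α v ≤ D) ∧
        (∀ s : ℤ, -1 ≤ s → s ≤ (N : ℤ) - 1 →
          (∀ u v : ℕ, (u : ℤ) + (v : ℤ) = (N : ℤ) - s - 1 →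
            α u + ((d : ℤ) - 1) * α v ≤ D) → sstar ≤ s)) ∧
      ∃ vfun : ℕ → ℕ,
        (∀ s : ℕ, (s : ℤ) ≤ sstar →
          (vfun s ≤ N - s ∧
            D < α (N - s - vfun s) + ((d : ℤ) - 1) * α (vfun s) ∧
            (∀ v : ℕ, v ≤ N - s → D < α (N - s - v) + ((d : ℤ) - 1) * α v →
              v ≤ vfun s) ∧
            (N : ℤ) + sstar - 2 * (s : ℤ) ≤ 2 * (vfun s : ℤ))) ∧
        (∀ s : ℕ, 0 < s → (s : ℤ) ≤ sstar → vfun s + 1 ≤ vfun (s - 1)) := by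
  set c : ℤ := d - 1
  have hc : 1 ≤ c := by omega
  have hα : ∀ m ≤ N, MonotoneOn α (Set.Iic m) := fun m hm i _ j hj hij =>
    hmono i j hij (le_trans hj hm)
  set K := maxBoundedLevel α c D N
  have hKN : K ≤ N := maxBoundedLevel_le N
  have hK := boundedAt_maxBoundedLevel (α := α) (c := c) (D := D)
    (by rwa [show 1 + c = d by ring]) N
  have hexc : ∀ s : ℕ, s + K + 1 ≤ N → ∃ v ≤ N - s, Excess α c D (N - s) v :=
    fun s hs => exists_excess_of_not_boundedAt fun h => by
      have := le_maxBoundedLevel (Nat.sub_le N s) h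
      omega
  refine ⟨N - 1 - K, ⟨by omega, by omega, fun u v huv => hK u v (by omega), ?_⟩,
    fun s => maxExcess α c D (N - s), fun s hs => ?_, fun s hs₀ hs => ?_⟩
  · intro s hs₁ _ hs
    have := le_maxBoundedLevel (N := N) (k := (N - 1 - s).toNat) (by omega)
      fun u v huv => hs u v (by omega)
    omega
  · dsimp only
    obtain ⟨v, hvm, hv⟩ := hexc s (by omega)
    have := two_mul_sub_maxExcess_le (N := N) (Nat.sub_le N s) (hα _ (Nat.sub_le N s)) hc hvm hv
    exact ⟨maxExcess_le _, excess_maxExcess hvm hv, fun _ => le_maxExcess, by omega⟩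
  · obtain ⟨v, hvm, hv⟩ := hexc s (by omega)
    dsimp only
    rw [show N - (s - 1) = N - s + 1 by omega]
    exact succ_maxExcess_le (hα _ (by omega)) hc hvm hv

theorem stmt3 (N d : ℕ) (hN : 1 ≤ N) (hd : 2 ≤ d)
    (α : ℕ → ℤ) (hmono : ∀ i j, i ≤ j → j ≤ N → α i ≤ α j)
    (hnz : ∃ i ≤ N, α i ≠ 0)
    (hsum : ∑ i ∈ Finset.range (N + 1), α i = 0)
    (D : ℤ) (hD : (d : ℤ) * α 0 ≤ D) :
    ∃ sstar : ℤ,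
      (-1 ≤ sstar ∧ sstar ≤ (N : ℤ) - 1 ∧
        (∀ u v : ℕ, (u : ℤ) + (v : ℤ) = (N : ℤ) - sstar - 1 →
          α u + ((d : ℤ) - 1) * α v ≤ D) ∧
        (∀ s : ℤ, -1 ≤ s → s ≤ (N : ℤ) - 1 →
          (∀ u v : ℕ, (u : ℤ) + (v : ℤ) = (N : ℤ) - s - 1 →
            α u + ((d : ℤ) - 1) * α v ≤ D) → sstar ≤ s)) ∧
      ∃ vfun : ℕ → ℕ,
        (∀ s : ℕ, (s : ℤ) ≤ sstar →
          (vfun s ≤ N - s ∧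
            D < α (N - s - vfun s) + ((d : ℤ) - 1) * α (vfun s) ∧
            (∀ v : ℕ, v ≤ N - s → D < α (N - s - v) + ((d : ℤ) - 1) * α v →
              v ≤ vfun s) ∧
            (N : ℤ) + sstar - 2 * (s : ℤ) ≤ 2 * (vfun s : ℤ))) ∧
        (∀ s : ℕ, 0 < s → (s : ℤ) ≤ sstar → vfun s + 1 ≤ vfun (s - 1)) :=
  stmt3_general N d hd α hmono D hD
end

section
/- Let N ≥ 1, c ≥ 1, and 0 ≤ s ≤ N-1 be integers with s + 1 ≤ c, let k_1, …, k_c be real numbers, let β_0, …, β_s be real numbers, and let j_0, …, j_s be distinct indices in {1,…,c} with I = {j_0,…,j_s}. Then the following algebraic identity holds: Σ_{t=0}^{s} β_t·k_{j_t} − (Σ_{i ∉ I} k_i)·(β_0+⋯+β_s)/(N−s) = Σ_{t=0}^{s} (β_t + (β_0+⋯+β_s)/(N−s))·(k_{j_t} − (k_1+⋯+k_c)/(N+1)). -/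
/-!
Write `S = ∑ β`, `K = ∑ k`, `A = ∑ k_{j_t}`, `D = N - s` and `M = N + 1`. Expanding the right-hand
side, everything cancels against the left-hand side except `K S (1/D - 1/M - (s+1)/(D M))`, which
vanishes because `M - D = s + 1` is exactly the number of indices `j_t`.
-/

open Finset

theorem Finset.sum_sdiff_image_eq_sub {ι κ M : Type*} [Fintype ι] [Fintype κ] [DecidableEq κ]
    [AddCommGroup M] (f : κ → M) {j : ι → κ} (hj : Function.Injective j) :
    ∑ i ∈ univ \ univ.image j, f i = ∑ i, f i - ∑ t, f (j t) := by
  rw [sum_sdiff_eq_sub (subset_univ _), sum_image fun _ _ _ _ h => hj h]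

theorem sum_mul_sub_sum_sdiff_image_mul_div {ι κ F : Type*} [Fintype ι] [Fintype κ]
    [DecidableEq κ] [Field F] (k : κ → F) (β : ι → F) {j : ι → κ} (hj : Function.Injective j)
    {D M : F} (hD : D ≠ 0) (hM : M ≠ 0) (hMD : M = D + Fintype.card ι) :
    (∑ t, β t * k (j t)) - (∑ i ∈ univ \ univ.image j, k i) * ((∑ t, β t) / D) =
      ∑ t, (β t + (∑ t', β t') / D) * (k (j t) - (∑ i, k i) / M) := by
  rw [sum_sdiff_image_eq_sub k hj]
  have expand : ∑ t, (β t + (∑ t', β t') / D) * (k (j t) - (∑ i, k i) / M) =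
      ∑ t, β t * k (j t) - (∑ t, β t) * ((∑ i, k i) / M) + (∑ t', β t') / D * ∑ t, k (j t)
        - Fintype.card ι * ((∑ t', β t') / D * ((∑ i, k i) / M)) := by
    simp only [add_mul, mul_sub, sum_add_distrib, sum_sub_distrib, ← sum_mul, ← mul_sum,
      sum_const, card_univ, nsmul_eq_mul]
    ring
  rw [expand]
  subst hMD
  field_simp
  ring

theorem stmt6_general (N c s : ℕ) (hN : 1 ≤ N) (hsN : s ≤ N - 1)
    (k : Fin c → ℝ) (β : Fin (s + 1) → ℝ)
    (j : Fin (s + 1) → Fin c) (hj : Function.Injective j) :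
    (∑ t, β t * k (j t)) -
        (∑ i ∈ Finset.univ \ Finset.image j Finset.univ, k i) *
          ((∑ t, β t) / ((N : ℝ) - (s : ℝ))) =
      ∑ t, (β t + (∑ t', β t') / ((N : ℝ) - (s : ℝ))) *
        (k (j t) - (∑ i, k i) / ((N : ℝ) + 1)) := by
  have hs_lt : (s : ℝ) < N := by exact_mod_cast (show s < N by omega)
  refine sum_mul_sub_sum_sdiff_image_mul_div k β hj (sub_ne_zero.2 hs_lt.ne') (by positivity) ?_
  rw [Fintype.card_fin]
  push_cast
  ring

theorem stmt6 (N c s : ℕ) (hN : 1 ≤ N) (hc : 1 ≤ c) (hsN : s ≤ N - 1)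
    (hsc : s + 1 ≤ c)
    (k : Fin c → ℝ) (β : Fin (s + 1) → ℝ)
    (j : Fin (s + 1) → Fin c) (hj : Function.Injective j) :
    (∑ t, β t * k (j t)) -
        (∑ i ∈ Finset.univ \ Finset.image j Finset.univ, k i) *
          ((∑ t, β t) / ((N : ℝ) - (s : ℝ))) =
      ∑ t, (β t + (∑ t', β t') / ((N : ℝ) - (s : ℝ))) *
        (k (j t) - (∑ i, k i) / ((N : ℝ) + 1)) :=
  stmt6_general N c s hN hsN k β j hj
end

section
/- Let N ≥ 1, c ≥ 1 be integers with c ≤ N, let d_1, …, d_c be positive integers, and fix i ∈ {1,…,c}. Consider the polynomial in one variable X given by P_i(X) = Σ_{I ⊆ {1,…,c}, i ∉ I} (−1)^{c−1−|I|} · binom(N + X − Σ_{j ∉ I} d_j, N), where binom(N + X − m, N) denotes the polynomial (X + N − m)(X + N − 1 − m)⋯(X + 1 − m)/N!. Then P_i has degree N − c + 1 and its leading coefficient equals (∏_{j ≠ i} d_j)/(N − c + 1)!. -/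
/-!
Since `taylor (-m) f = f(X - m)`, the polynomial `N! · P_i` is the alternating sum
`∑_{J ⊆ S} (-1)^|J| f(X - ∑_{j ∈ J} d_j)` with `S = {1, …, c} \ {i}` and
`f = (X + 1 - d_i) ⋯ (X + N - d_i)`, i.e. the composite of the backward differences
`g ↦ g - g(X - d_j)`, `j ∈ S`, applied to the monic polynomial `f` of degree `N`.
Each such difference lowers the degree `n + 1` of a polynomial by one and multiplies its
leading coefficient by `(n + 1) d_j`, because the coefficient of `X^n` in `g - g(X - a)` is
`(n + 1) a` times the coefficient of `X^(n+1)` in `g`. After `c - 1` steps the degree is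
`N - c + 1` and the leading coefficient is `N (N - 1) ⋯ (N - c + 2) ∏_{j ≠ i} d_j`.
-/

open Polynomial Finset
open scoped Nat

theorem Finset.sum_powerset_sdiff {ι M : Type*} [DecidableEq ι] [AddCommMonoid M]
    (S : Finset ι) (g : Finset ι → M) :
    ∑ I ∈ S.powerset, g (S \ I) = ∑ J ∈ S.powerset, g J :=
  sum_nbij' (S \ ·) (S \ ·) (fun _ _ ↦ mem_powerset.mpr sdiff_subset)
    (fun _ _ ↦ mem_powerset.mpr sdiff_subset)
    (fun _ hI ↦ sdiff_sdiff_eq_self (mem_powerset.mp hI))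
    (fun _ hJ ↦ sdiff_sdiff_eq_self (mem_powerset.mp hJ)) (fun _ _ ↦ rfl)

theorem Nat.cast_descFactorial_div_factorial {K : Type*} [Field K] [CharZero K] {n k : ℕ}
    (h : k ≤ n) : (n.descFactorial k : K) / n ! = ((n - k)! : K)⁻¹ := by
  rw [← Nat.factorial_mul_descFactorial h, Nat.cast_mul]
  have : (n.descFactorial k : K) ≠ 0 :=
    Nat.cast_ne_zero.mpr (Nat.descFactorial_eq_zero_iff_lt.not.mpr (by omega))
  field_simp

namespace Polynomial

section CommRing

variable {R ι : Type*} [CommRing R]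

theorem prod_X_add_C_sub_eq_taylor (s : Finset ι) (b : ι → R) (m : R) :
    ∏ t ∈ s, (X + C (b t - m)) = taylor (-m) (∏ t ∈ s, (X + C (b t))) := by
  rw [taylor_apply, prod_comp]
  refine prod_congr rfl fun t _ ↦ ?_
  rw [add_comp, X_comp, C_comp, C_sub, C_neg]
  ring

theorem natDegree_prod_X_add_C [Nontrivial R] (s : Finset ι) (b : ι → R) :
    (∏ t ∈ s, (X + C (b t))).natDegree = #s := by
  rw [natDegree_prod_of_monic _ _ fun t _ ↦ monic_X_add_C _]
  simp only [natDegree_X_add_C, sum_const, smul_eq_mul, mul_one]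

theorem coeff_sub_taylor_neg {f : R[X]} {k : ℕ} (hf : f.natDegree ≤ k + 1) (a : R) :
    (f - taylor (-a) f).coeff k = (k + 1) * a * f.coeff (k + 1) := by
  have hdeg : (hasseDeriv k f).natDegree < 2 := by
    have := natDegree_hasseDeriv_le f k
    omega
  rw [coeff_sub, taylor_coeff, eval_eq_sum_range' hdeg, sum_range_succ, sum_range_one]
  simp only [hasseDeriv_coeff, Nat.zero_add, Nat.choose_self, Nat.cast_one, one_mul, pow_zero,
    pow_one, Nat.add_comm 1 k, Nat.choose_succ_self_right]
  push_cast
  ring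

noncomputable def iteratedBackwardDiff (a : ι → R) (S : Finset ι) (f : R[X]) : R[X] :=
  ∑ J ∈ S.powerset, (-1 : R) ^ #J • taylor (-∑ j ∈ J, a j) f

theorem iteratedBackwardDiff_empty (a : ι → R) (f : R[X]) :
    iteratedBackwardDiff a ∅ f = f := by
  simp [iteratedBackwardDiff]

theorem iteratedBackwardDiff_insert [DecidableEq ι] (a : ι → R) {s : ι} {S : Finset ι}
    (hs : s ∉ S) (f : R[X]) :
    iteratedBackwardDiff a (insert s S) f = iteratedBackwardDiff a S (f - taylor (-a s) f) := by
  rw [iteratedBackwardDiff, iteratedBackwardDiff, sum_powerset_insert hs, ← sum_add_distrib]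
  refine sum_congr rfl fun J hJ ↦ ?_
  have hsJ : s ∉ J := fun h ↦ hs (mem_powerset.mp hJ h)
  rw [card_insert_of_notMem hsJ, sum_insert hsJ, map_sub, smul_sub, taylor_taylor, pow_succ,
    mul_neg_one, neg_smul, sub_eq_add_neg, neg_add_rev]

theorem sum_powerset_erase_eq_iteratedBackwardDiff [Fintype ι] [DecidableEq ι] (a : ι → R)
    (i : ι) (g : R[X]) :
    ∑ I ∈ (univ.erase i).powerset,
        (-1 : R) ^ (Fintype.card ι - 1 - #I) • taylor (-∑ j ∈ Iᶜ, a j) g =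
      iteratedBackwardDiff a (univ.erase i) (taylor (-a i) g) := by
  rw [iteratedBackwardDiff]
  conv_rhs => rw [← sum_powerset_sdiff]
  refine sum_congr rfl fun I hI ↦ ?_
  have hIS : I ⊆ univ.erase i := mem_powerset.mp hI
  have hcompl : Iᶜ = insert i (univ.erase i \ I) := by
    rw [compl_eq_univ_sdiff, ← insert_sdiff_of_notMem _ fun h ↦ by simpa using hIS h,
      insert_erase (mem_univ i)]
  rw [card_sdiff_of_subset hIS, card_erase_of_mem (mem_univ i), card_univ, taylor_taylor, hcompl,
    sum_insert (by simp), neg_add_rev]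

end CommRing

section CharZero

variable {R ι : Type*} [CommRing R] [NoZeroDivisors R] [CharZero R]

theorem natDegree_sub_taylor_neg {f : R[X]} {n : ℕ} (hf : f.natDegree = n + 1) {a : R}
    (ha : a ≠ 0) : (f - taylor (-a) f).natDegree = n := by
  refine natDegree_eq_of_le_of_coeff_ne_zero ?_ ?_
  · refine natDegree_le_iff_coeff_eq_zero.mpr fun k hk ↦ ?_
    rw [coeff_sub_taylor_neg (by omega), coeff_eq_zero_of_natDegree_lt (by omega), mul_zero]
  · have hf0 : f ≠ 0 := by
      rintro rfl
      simp at hf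
    rw [coeff_sub_taylor_neg hf.le, ← hf]
    exact mul_ne_zero (mul_ne_zero (by norm_cast) ha) (leadingCoeff_ne_zero.mpr hf0)

theorem leadingCoeff_sub_taylor_neg {f : R[X]} {n : ℕ} (hf : f.natDegree = n + 1) {a : R}
    (ha : a ≠ 0) : (f - taylor (-a) f).leadingCoeff = (n + 1) * a * f.leadingCoeff := by
  rw [leadingCoeff, natDegree_sub_taylor_neg hf ha, coeff_sub_taylor_neg hf.le, leadingCoeff, hf]

theorem natDegree_iteratedBackwardDiff {a : ι → R} {S : Finset ι} (ha : ∀ j ∈ S, a j ≠ 0)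
    {f : R[X]} (hS : #S ≤ f.natDegree) :
    (iteratedBackwardDiff a S f).natDegree = f.natDegree - #S := by
  classical
  induction S using Finset.induction_on generalizing f with
  | empty => rw [iteratedBackwardDiff_empty, card_empty, Nat.sub_zero]
  | @insert s S hs ih =>
    rw [card_insert_of_notMem hs] at hS ⊢
    obtain ⟨n, hf⟩ : ∃ n, f.natDegree = n + 1 := ⟨f.natDegree - 1, by omega⟩
    have hdiff := natDegree_sub_taylor_neg hf (ha s (mem_insert_self s S))
    rw [iteratedBackwardDiff_insert a hs,
      ih (fun j hj ↦ ha j (mem_insert_of_mem hj)) (by omega), hdiff, hf]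
    omega

theorem leadingCoeff_iteratedBackwardDiff {a : ι → R} {S : Finset ι} (ha : ∀ j ∈ S, a j ≠ 0)
    {f : R[X]} (hS : #S ≤ f.natDegree) :
    (iteratedBackwardDiff a S f).leadingCoeff =
      f.natDegree.descFactorial #S * (∏ j ∈ S, a j) * f.leadingCoeff := by
  classical
  induction S using Finset.induction_on generalizing f with
  | empty => simp [iteratedBackwardDiff_empty]
  | @insert s S hs ih =>
    rw [card_insert_of_notMem hs] at hS ⊢
    obtain ⟨n, hf⟩ : ∃ n, f.natDegree = n + 1 := ⟨f.natDegree - 1, by omega⟩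
    have has := ha s (mem_insert_self s S)
    rw [iteratedBackwardDiff_insert a hs, ih (fun j hj ↦ ha j (mem_insert_of_mem hj))
      (by rw [natDegree_sub_taylor_neg hf has]; omega), natDegree_sub_taylor_neg hf has,
      leadingCoeff_sub_taylor_neg hf has, hf, Nat.succ_descFactorial_succ, prod_insert hs]
    push_cast
    ring

end CharZero

end Polynomial

theorem stmt9_general (N c : ℕ) (hc : 1 ≤ c) (hcN : c ≤ N)
    (d : Fin c → ℕ) (hd : ∀ j, 0 < d j) (i : Fin c)
    (P : Polynomial ℚ)
    (hP : P = ∑ I ∈ (Finset.univ.erase i).powerset,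
      ((-1 : ℚ) ^ (c - 1 - I.card)) •
        ((N.factorial : ℚ)⁻¹ •
          ∏ t ∈ Finset.range N,
            (Polynomial.X + Polynomial.C ((t : ℚ) + 1 - ∑ j ∈ Iᶜ, (d j : ℚ)))) ) :
    P.degree = (N - c + 1 : ℕ) ∧
      P.leadingCoeff = (∏ j ∈ Finset.univ.erase i, (d j : ℚ)) / ((N - c + 1).factorial : ℚ) := by
  classical
  set S : Finset (Fin c) := univ.erase i
  set f := taylor (-(d i : ℚ)) (∏ t ∈ range N, (X + C ((t : ℚ) + 1)))
  have hPf : P = (N ! : ℚ)⁻¹ • iteratedBackwardDiff (fun j ↦ (d j : ℚ)) S f := by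
    simp_rw [hP, prod_X_add_C_sub_eq_taylor (range N) (fun t : ℕ ↦ (t : ℚ) + 1),
      smul_comm _ (N ! : ℚ)⁻¹, ← smul_sum]
    rw [← sum_powerset_erase_eq_iteratedBackwardDiff, Fintype.card_fin]
  have hf : f.natDegree = N := by rw [natDegree_taylor, natDegree_prod_X_add_C, card_range]
  have hS : #S = c - 1 := by simp [S]
  have hSf : #S ≤ f.natDegree := by omega
  have hd0 : ∀ j ∈ S, (d j : ℚ) ≠ 0 := fun j _ ↦ by exact_mod_cast (hd j).ne'
  have hlc : P.leadingCoeff = (∏ j ∈ S, (d j : ℚ)) / (N - c + 1)! := by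
    rw [hPf, smul_eq_C_mul, leadingCoeff_mul, leadingCoeff_C,
      leadingCoeff_iteratedBackwardDiff hd0 hSf, leadingCoeff_taylor,
      (monic_prod_of_monic _ _ fun t _ ↦ monic_X_add_C _).leadingCoeff, mul_one, hf, hS,
      ← mul_assoc, inv_mul_eq_div, Nat.cast_descFactorial_div_factorial (by omega),
      show N - (c - 1) = N - c + 1 by omega, inv_mul_eq_div]
  have hP0 : P ≠ 0 := by
    rw [← leadingCoeff_ne_zero, hlc]
    exact div_ne_zero (prod_ne_zero_iff.mpr hd0) (by positivity)
  refine ⟨?_, hlc⟩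
  rw [degree_eq_natDegree hP0, hPf, smul_eq_C_mul, natDegree_C_mul (by positivity),
    natDegree_iteratedBackwardDiff hd0 hSf, hf, hS]
  congr 1
  omega

theorem stmt9 (N c : ℕ) (hN : 1 ≤ N) (hc : 1 ≤ c) (hcN : c ≤ N)
    (d : Fin c → ℕ) (hd : ∀ j, 0 < d j) (i : Fin c)
    (P : Polynomial ℚ)
    (hP : P = ∑ I ∈ (Finset.univ.erase i).powerset,
      ((-1 : ℚ) ^ (c - 1 - I.card)) •
        ((N.factorial : ℚ)⁻¹ •
          ∏ t ∈ Finset.range N,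
            (Polynomial.X + Polynomial.C ((t : ℚ) + 1 - ∑ j ∈ Iᶜ, (d j : ℚ)))) ) :
    P.degree = (N - c + 1 : ℕ) ∧
      P.leadingCoeff = (∏ j ∈ Finset.univ.erase i, (d j : ℚ)) / ((N - c + 1).factorial : ℚ) :=
  stmt9_general N c hc hcN d hd i P hP
end

section
/- Work in the polynomial ring A = ℤ[X_0,…,X_N, (a_L)_{L ∈ M_{d_1}}, (b_M)_{M ∈ M_{d_2}}], where M_d denotes the set of monomials of degree d in X_0,…,X_N. Let f = Σ_{L ∈ M_{d_1}} a_L·L and g = Σ_{M ∈ M_{d_2}} b_M·M be the generic homogeneous forms of degrees d_1 ≤ d_2. Then for every integer j with 0 ≤ j ≤ d_2 − d_1 + 1 there exist q_j, r_j ∈ A, homogeneous of tridegree (d_2 − d_1, j − 1, 1) and (d_2, j, 1) respectively (degrees in the X-variables, the a-variables, and the b-variables), such that a_{X_0^{d_1}}^j · g = q_j·f + r_j and no monomial of r_j is divisible by X_0^{d_2 + 1 − j}. Moreover, if j ≥ 1, every monomial occurring in r_j is divisible by a_{X_0^{d_1}} or by b_{X_0^{d_2}}. -/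
open MvPolynomial

/-- Index type for the monomials of `ℤ[X_0,…,X_N]` (indexed by exponent vectors). -/
abbrev MonIdx (N : ℕ) := Fin (N + 1) →₀ ℕ

/-- Variables of the big polynomial ring: the `X_s`, the `a_L`, and the `b_M`. -/
abbrev GenVar (N : ℕ) := Fin (N + 1) ⊕ (MonIdx N ⊕ MonIdx N)

/-- The finite set of exponent vectors of total degree `d`. -/
noncomputable def degMon (N d : ℕ) : Finset (MonIdx N) :=
  (Finset.Iic (Finsupp.equivFunOnFinite.symm fun _ => d)).filter
    (fun m => (m.sum fun _ e => e) = d)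

/-- The generic form of degree `d` : `Σ_L a_L · L`, with coefficient variables `a`. -/
noncomputable def genericForm (N d : ℕ) (a : MonIdx N → GenVar N) :
    MvPolynomial (GenVar N) ℤ :=
  ∑ L ∈ degMon N d,
    X (a L) * MvPolynomial.monomial (L.mapDomain Sum.inl) (1 : ℤ)

/-- Weight counting the total degree in the `X`-variables. -/
def wX (N : ℕ) : GenVar N → ℕ := Sum.elim (fun _ => 1) (fun _ => 0)

/-- Weight counting the total degree in the `a`-variables. -/
def wa (N : ℕ) : GenVar N → ℕ :=
  Sum.elim (fun _ => 0) (Sum.elim (fun _ => 1) (fun _ => 0))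

/-- Weight counting the total degree in the `b`-variables. -/
def wb (N : ℕ) : GenVar N → ℕ :=
  Sum.elim (fun _ => 0) (Sum.elim (fun _ => 0) (fun _ => 1))

/-!
Generic Euclidean division with respect to `X_0`. Write `f = a·X_0^{d₁} - p`, where
`a = a_{X_0^{d₁}}` and every monomial of `p` has `X_0`-degree `< d₁`. If `r` has `X_0`-degree
at most `e ≥ d₁`, split `r = X_0^e·c + r'` with `c` free of `X_0` and `r'` of `X_0`-degree `< e`;
then `a·r = (c·X_0^{e-d₁})·f + (a·r' + c·X_0^{e-d₁}·p)`, and the new remainder has `X_0`-degree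
`< e`. Since `a·X_0^{d₁}`, `f` and `p` share the same tridegree, each step preserves
homogeneity in all three gradings, and starting from `r = g` (where `c = b_{X_0^{d₂}}`) every
later remainder lies in the ideal `(a, b_{X_0^{d₂}})`: its terms are `a·r'` and multiples of a `c`
that is itself in that ideal.
-/

theorem Finsupp.weight_mapDomain {σ τ : Type*} (w : τ → ℕ) (f : σ → τ) (L : σ →₀ ℕ) :
    Finsupp.weight w (L.mapDomain f) = Finsupp.weight (w ∘ f) L := by
  simp only [Finsupp.weight_apply]
  exact Finsupp.sum_mapDomain_index (fun _ => zero_smul _ _) (fun _ _ _ => add_smul _ _ _)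

namespace MvPolynomial

variable {σ R : Type*} [CommRing R]

theorem degreeOf_X_pow_le (i : σ) (k : ℕ) : degreeOf i (X i ^ k : MvPolynomial σ R) ≤ k := by
  rw [degreeOf_le_iff]
  intro m hm
  rw [X_pow_eq_monomial] at hm
  rw [Finset.mem_singleton.mp (support_monomial_subset hm), Finsupp.single_eq_same]

theorem IsWeightedHomogeneous.divMonomial {w : σ → ℕ} {φ : MvPolynomial σ R} {n : ℕ}
    (hφ : φ.IsWeightedHomogeneous w n) (s : σ →₀ ℕ) :
    (φ.divMonomial s).IsWeightedHomogeneous w (n - Finsupp.weight w s) := by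
  intro m hm
  rw [coeff_divMonomial] at hm
  have := hφ hm
  rw [map_add] at this
  omega

theorem IsWeightedHomogeneous.modMonomial {w : σ → ℕ} {φ : MvPolynomial σ R} {n : ℕ}
    (hφ : φ.IsWeightedHomogeneous w n) (s : σ →₀ ℕ) :
    (φ.modMonomial s).IsWeightedHomogeneous w n := by
  intro m hm
  by_cases hs : s ≤ m
  · exact absurd (coeff_modMonomial_of_le φ hs) hm
  · exact hφ (by rwa [coeff_modMonomial_of_not_le φ hs] at hm)

theorem divMonomial_mem_span_X_image {S : Set σ} {φ : MvPolynomial σ R} {s : σ →₀ ℕ}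
    (hφ : φ ∈ Ideal.span (X '' S)) (hs : ∀ i ∈ S, s i = 0) :
    φ.divMonomial s ∈ Ideal.span (X '' S) := by
  rw [mem_ideal_span_X_image] at hφ ⊢
  intro m hm
  obtain ⟨i, hi, hsm⟩ := hφ (s + m) (by simpa [mem_support_iff] using hm)
  exact ⟨i, hi, by simpa [hs i hi] using hsm⟩

theorem IsWeightedHomogeneous.X_mul {w : σ → ℕ} {φ : MvPolynomial σ R} {n m : ℕ}
    (hφ : φ.IsWeightedHomogeneous w n) (i : σ) (h : w i + n = m) :
    (X i * φ).IsWeightedHomogeneous w m :=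
  h ▸ (isWeightedHomogeneous_X R w i).mul hφ

section DivisionStep

variable (x a : σ) (d e : ℕ) (f r : MvPolynomial σ R)

noncomputable def divStepQuot : MvPolynomial σ R :=
  r.divMonomial (Finsupp.single x e) * X x ^ (e - d)

noncomputable def divStepRem : MvPolynomial σ R :=
  X a * r.modMonomial (Finsupp.single x e) + divStepQuot x d e r * (X a * X x ^ d - f)

variable {x a d e f r}

theorem X_mul_eq_divStepQuot_mul_add_divStepRem (hde : d ≤ e) :
    X a * r = divStepQuot x d e r * f + divStepRem x a d e f r := by
  have hx : monomial (Finsupp.single x e) (1 : R) = X x ^ (e - d) * X x ^ d := by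
    rw [← pow_add, Nat.sub_add_cancel hde, X_pow_eq_monomial]
  conv_lhs => rw [← divMonomial_add_modMonomial r (Finsupp.single x e), hx]
  rw [divStepRem, divStepQuot]
  ring

theorem degreeOf_divMonomial_single_eq_zero (hr : degreeOf x r ≤ e) :
    degreeOf x (r.divMonomial (Finsupp.single x e)) = 0 := by
  rw [← Nat.le_zero, degreeOf_le_iff]
  intro m hm
  have := degreeOf_le_iff.mp hr _ (by simpa [mem_support_iff] using hm)
  simp only [Finsupp.add_apply, Finsupp.single_eq_same] at this
  omega

theorem degreeOf_modMonomial_single_lt (he : 0 < e) :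
    degreeOf x (r.modMonomial (Finsupp.single x e)) < e := by
  rw [degreeOf_lt_iff he]
  intro m hm
  by_contra! h
  exact mem_support_iff.mp hm
    (coeff_modMonomial_of_le r (Finsupp.single_le_iff.mpr h))

theorem degreeOf_divStepRem_lt (hax : a ≠ x) (hd : 0 < d) (hde : d ≤ e)
    (hr : degreeOf x r ≤ e) (hf : degreeOf x (X a * X x ^ d - f) < d) :
    degreeOf x (divStepRem x a d e f r) < e := by
  have hrem : degreeOf x (X a * r.modMonomial (Finsupp.single x e)) < e := by
    rw [mul_comm, degreeOf_mul_X_of_ne _ hax.symm]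
    exact degreeOf_modMonomial_single_lt (by omega)
  have hquot : degreeOf x (divStepQuot x d e r) ≤ e - d :=
    (degreeOf_mul_le _ _ _).trans (by
      rw [degreeOf_divMonomial_single_eq_zero hr, zero_add]
      exact degreeOf_X_pow_le x _)
  refine (degreeOf_add_le _ _ _).trans_lt (max_lt hrem ?_)
  calc degreeOf x (divStepQuot x d e r * (X a * X x ^ d - f))
      ≤ degreeOf x (divStepQuot x d e r) + degreeOf x (X a * X x ^ d - f) :=
        degreeOf_mul_le _ _ _
    _ < e := by omega

theorem divStepRem_mem {I : Ideal (MvPolynomial σ R)} (ha : X a ∈ I)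
    (hr : r.divMonomial (Finsupp.single x e) ∈ I) : divStepRem x a d e f r ∈ I :=
  I.add_mem (I.mul_mem_right _ ha) (I.mul_mem_right _ (I.mul_mem_right _ hr))

variable {w : σ → ℕ} {n : ℕ}

theorem IsWeightedHomogeneous.divStepQuot (hr : r.IsWeightedHomogeneous w n) :
    (divStepQuot x d e r).IsWeightedHomogeneous w (n - e * w x + (e - d) * w x) := by
  have := (hr.divMonomial (Finsupp.single x e)).mul
    ((isWeightedHomogeneous_X R w x).pow (e - d))
  rw [MvPolynomial.divStepQuot]
  simpa [Finsupp.weight_single, smul_eq_mul] using this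

theorem IsWeightedHomogeneous.divStepRem (hde : d ≤ e) (hen : e * w x ≤ n)
    (hr : r.IsWeightedHomogeneous w n) (hf : f.IsWeightedHomogeneous w (w a + d * w x)) :
    (divStepRem x a d e f r).IsWeightedHomogeneous w (w a + n) := by
  have hp : (X a * X x ^ d - f).IsWeightedHomogeneous w (w a + d * w x) :=
    ((isWeightedHomogeneous_X R w a).mul ((isWeightedHomogeneous_X R w x).pow d)).sub hf
  refine ((isWeightedHomogeneous_X R w a).mul (hr.modMonomial _)).add ?_
  convert hr.divStepQuot.mul hp using 1
  have : (e - d) * w x + d * w x = e * w x := by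
    rw [← add_mul, Nat.sub_add_cancel hde]
  omega

end DivisionStep

end MvPolynomial

section GenericForm

variable {N d : ℕ} {A : MonIdx N → GenVar N}

theorem mem_degMon {L : MonIdx N} : L ∈ degMon N d ↔ L.degree = d := by
  simp only [degMon, Finset.mem_filter, Finset.mem_Iic]
  refine ⟨fun h => h.2, fun h => ⟨Finsupp.le_def.mpr fun s => ?_, h⟩⟩
  simpa [← h] using Finsupp.le_degree s L

theorem eq_single_of_mem_degMon {L : MonIdx N} {i : Fin (N + 1)} (hL : L ∈ degMon N d)
    (hi : d ≤ L i) : L = Finsupp.single i d := by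
  have hsplit := Finsupp.single_add_erase i L
  have hdeg := mem_degMon.mp hL
  rw [← hsplit, map_add, Finsupp.degree_single] at hdeg
  have herase : L.erase i = 0 := (Finsupp.degree_eq_zero_iff _).mp (by omega)
  rw [← hsplit, herase, add_zero, show L i = d by omega]

theorem genericMonomial_apply_inl {L : MonIdx N} {i : Fin (N + 1)} (hA : A L ≠ Sum.inl i) :
    (Finsupp.single (A L) 1 + L.mapDomain Sum.inl : GenVar N →₀ ℕ) (Sum.inl i) = L i := by
  rw [Finsupp.add_apply, Finsupp.single_eq_of_ne hA.symm, zero_add,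
    Finsupp.mapDomain_apply Sum.inl_injective]

theorem mem_support_sum_genericMonomial {s : Finset (MonIdx N)} {m : GenVar N →₀ ℕ}
    (hm : m ∈ (∑ L ∈ s, X (A L) * monomial (L.mapDomain Sum.inl) (1 : ℤ)).support) :
    ∃ L ∈ s, m = Finsupp.single (A L) 1 + L.mapDomain Sum.inl := by
  obtain ⟨L, hL, hmL⟩ := Finset.mem_biUnion.mp (support_sum hm)
  rw [X, monomial_mul, one_mul, support_monomial, if_neg one_ne_zero] at hmL
  exact ⟨L, hL, Finset.mem_singleton.mp hmL⟩

theorem genericForm_isWeightedHomogeneous (w : GenVar N → ℕ) {n : ℕ}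
    (hw : ∀ L ∈ degMon N d, w (A L) + Finsupp.weight (w ∘ Sum.inl) L = n) :
    (genericForm N d A).IsWeightedHomogeneous w n :=
  IsWeightedHomogeneous.sum _ _ _ fun L hL => by
    rw [← hw L hL, ← Finsupp.weight_mapDomain]
    exact (isWeightedHomogeneous_X ℤ w _).mul (isWeightedHomogeneous_monomial _ _ _ rfl)

theorem genericForm_isWeightedHomogeneous_wX (hA : ∀ L, wX N (A L) = 0) :
    (genericForm N d A).IsWeightedHomogeneous (wX N) d :=
  genericForm_isWeightedHomogeneous _ fun L hL => by
    rw [hA, zero_add, ← mem_degMon.mp hL, Finsupp.degree_eq_weight_one]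
    rfl

theorem genericForm_isWeightedHomogeneous_of_inl {n : ℕ} (w : GenVar N → ℕ)
    (hw : ∀ i, w (Sum.inl i) = 0) (hA : ∀ L, w (A L) = n) :
    (genericForm N d A).IsWeightedHomogeneous w n :=
  genericForm_isWeightedHomogeneous _ fun L _ => by
    simp [hA, show w ∘ Sum.inl = 0 from funext hw, Finsupp.weight_apply]

variable {i : Fin (N + 1)}

theorem degreeOf_genericForm_le (hA : ∀ L, A L ≠ Sum.inl i) :
    degreeOf (Sum.inl i) (genericForm N d A) ≤ d := by
  rw [degreeOf_le_iff]
  intro m hm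
  obtain ⟨L, hL, rfl⟩ := mem_support_sum_genericMonomial hm
  rw [genericMonomial_apply_inl (hA L), ← mem_degMon.mp hL]
  exact Finsupp.le_degree i L

theorem degreeOf_sub_genericForm_lt (hA : ∀ L, A L ≠ Sum.inl i) (hd : 0 < d) :
    degreeOf (Sum.inl i)
      (X (A (Finsupp.single i d)) * X (Sum.inl i) ^ d - genericForm N d A) < d := by
  have hlead : X (A (Finsupp.single i d)) * X (Sum.inl i) ^ d
      = X (A (Finsupp.single i d))
          * monomial ((Finsupp.single i d).mapDomain Sum.inl) (1 : ℤ) := by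
    rw [Finsupp.mapDomain_single, X_pow_eq_monomial]
  rw [genericForm, ← Finset.add_sum_erase _ _ (mem_degMon.mpr (Finsupp.degree_single i d)),
    ← hlead, sub_add_cancel_left, degreeOf_neg, degreeOf_lt_iff hd]
  intro m hm
  obtain ⟨L, hL, rfl⟩ := mem_support_sum_genericMonomial hm
  obtain ⟨hLi, hL⟩ := Finset.mem_erase.mp hL
  rw [genericMonomial_apply_inl (hA L)]
  by_contra! h
  exact hLi (eq_single_of_mem_degMon hL h)

theorem divMonomial_genericForm_mem_span_X_image {S : Set (GenVar N)}
    (hA : ∀ L, A L ≠ Sum.inl i) (hS : A (Finsupp.single i d) ∈ S) :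
    (genericForm N d A).divMonomial (Finsupp.single (Sum.inl i) d) ∈ Ideal.span (X '' S) := by
  rw [mem_ideal_span_X_image]
  intro m hm
  rw [mem_support_iff, coeff_divMonomial, ← mem_support_iff, genericForm] at hm
  obtain ⟨L, hL, hmL⟩ := mem_support_sum_genericMonomial hm
  have hLi : d ≤ L i := by
    have := DFunLike.congr_fun hmL (Sum.inl i)
    rw [genericMonomial_apply_inl (hA L), Finsupp.add_apply, Finsupp.single_eq_same] at this
    omega
  obtain rfl := eq_single_of_mem_degMon hL hLi
  refine ⟨_, hS, fun hm0 => ?_⟩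
  have := DFunLike.congr_fun hmL (A (Finsupp.single i d))
  simp only [Finsupp.add_apply, Finsupp.single_eq_same, Finsupp.single_eq_of_ne (hA _), hm0]
    at this
  omega

end GenericForm

abbrev coeffA (N : ℕ) (L : MonIdx N) : GenVar N := Sum.inr (Sum.inl L)

abbrev coeffB (N : ℕ) (M : MonIdx N) : GenVar N := Sum.inr (Sum.inr M)

section GenericDivision

variable {N d1 d2 : ℕ}

theorem exists_genericDivision_step (hd1 : 0 < d1) {j : ℕ} (hj : j + d1 ≤ d2)
    {r : MvPolynomial (GenVar N) ℤ}
    (hrX : r.IsWeightedHomogeneous (wX N) d2) (hra : r.IsWeightedHomogeneous (wa N) j)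
    (hrb : r.IsWeightedHomogeneous (wb N) 1) (hrx : degreeOf (Sum.inl 0) r ≤ d2 - j)
    (hrI : r.divMonomial (Finsupp.single (Sum.inl 0) (d2 - j)) ∈ Ideal.span
      (X '' {coeffA N (Finsupp.single 0 d1), coeffB N (Finsupp.single 0 d2)})) :
    ∃ Q R, X (coeffA N (Finsupp.single 0 d1)) * r = Q * genericForm N d1 (coeffA N) + R ∧
      Q.IsWeightedHomogeneous (wX N) (d2 - d1) ∧ Q.IsWeightedHomogeneous (wa N) j ∧
      Q.IsWeightedHomogeneous (wb N) 1 ∧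
      R.IsWeightedHomogeneous (wX N) d2 ∧ R.IsWeightedHomogeneous (wa N) (j + 1) ∧
      R.IsWeightedHomogeneous (wb N) 1 ∧ degreeOf (Sum.inl 0) R ≤ d2 - (j + 1) ∧
      R ∈ Ideal.span (X '' {coeffA N (Finsupp.single 0 d1), coeffB N (Finsupp.single 0 d2)}) := by
  have hde : d1 ≤ d2 - j := by omega
  have hfX := genericForm_isWeightedHomogeneous_wX (d := d1) (A := coeffA N) fun _ => rfl
  have hfa := genericForm_isWeightedHomogeneous_of_inl (d := d1) (A := coeffA N) (wa N)
    (fun _ => rfl) fun _ => rfl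
  have hfb := genericForm_isWeightedHomogeneous_of_inl (d := d1) (A := coeffA N) (wb N)
    (fun _ => rfl) fun _ => rfl
  have hQ := fun (w : GenVar N → ℕ) (n : ℕ) (hr : r.IsWeightedHomogeneous w n) =>
    hr.divStepQuot (x := Sum.inl 0) (d := d1) (e := d2 - j)
  have hR := fun (w : GenVar N → ℕ) (n : ℕ) (hr : r.IsWeightedHomogeneous w n) =>
    hr.divStepRem (x := Sum.inl 0) (a := coeffA N (Finsupp.single 0 d1))
      (f := genericForm N d1 (coeffA N)) hde
  refine ⟨_, _, X_mul_eq_divStepQuot_mul_add_divStepRem (x := Sum.inl 0) hde, ?_, ?_, ?_, ?_, ?_,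
    ?_, ?_, ?_⟩
  · simpa [wX, show d2 - (d2 - j) + (d2 - j - d1) = d2 - d1 by omega] using hQ _ _ hrX
  · simpa [wa] using hQ _ _ hra
  · simpa [wb] using hQ _ _ hrb
  · simpa [wX] using hR _ _ hrX (by simp [wX]) (by simpa [wX] using hfX)
  · simpa [wa, add_comm] using hR _ _ hra (by simp [wa]) (by simpa [wa] using hfa)
  · simpa [wb] using hR _ _ hrb (by simp [wb]) (by simpa [wb] using hfb)
  · have hf := degreeOf_sub_genericForm_lt (A := coeffA N) (i := 0) (fun _ => Sum.inr_ne_inl) hd1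
    have := degreeOf_divStepRem_lt (a := coeffA N (Finsupp.single 0 d1)) Sum.inr_ne_inl hd1 hde
      hrx hf
    omega
  · exact divStepRem_mem (Ideal.subset_span (Set.mem_image_of_mem _ (by simp))) hrI

theorem exists_genericDivision (hd1 : 0 < d1) {j : ℕ} (hj1 : 1 ≤ j) (hj : j + d1 ≤ d2 + 1) :
    ∃ q r, X (coeffA N (Finsupp.single 0 d1)) ^ j * genericForm N d2 (coeffB N)
        = q * genericForm N d1 (coeffA N) + r ∧
      q.IsWeightedHomogeneous (wX N) (d2 - d1) ∧ q.IsWeightedHomogeneous (wa N) (j - 1) ∧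
      q.IsWeightedHomogeneous (wb N) 1 ∧
      r.IsWeightedHomogeneous (wX N) d2 ∧ r.IsWeightedHomogeneous (wa N) j ∧
      r.IsWeightedHomogeneous (wb N) 1 ∧ degreeOf (Sum.inl 0) r ≤ d2 - j ∧
      r ∈ Ideal.span (X '' {coeffA N (Finsupp.single 0 d1), coeffB N (Finsupp.single 0 d2)}) := by
  induction j, hj1 using Nat.le_induction with
  | base =>
    obtain ⟨Q, R, hQR, hQ⟩ := exists_genericDivision_step hd1 (j := 0)
      (r := genericForm N d2 (coeffB N)) (by omega)
      (genericForm_isWeightedHomogeneous_wX fun _ => rfl)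
      (genericForm_isWeightedHomogeneous_of_inl _ (fun _ => rfl) fun _ => rfl)
      (genericForm_isWeightedHomogeneous_of_inl _ (fun _ => rfl) fun _ => rfl)
      (degreeOf_genericForm_le fun _ => Sum.inr_ne_inl)
      (divMonomial_genericForm_mem_span_X_image (fun _ => Sum.inr_ne_inl) (by simp))
    exact ⟨Q, R, by rw [pow_one, hQR], hQ⟩
  | succ j hj1 ih =>
    obtain ⟨q, r, hqr, hqX, hqa, hqb, hrX, hra, hrb, hrx, hrI⟩ := ih (by omega)
    obtain ⟨Q, R, hQR, hQX, hQa, hQb, hR⟩ := exists_genericDivision_step hd1 (by omega)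
      hrX hra hrb hrx (divMonomial_mem_span_X_image hrI (by simp))
    refine ⟨X (coeffA N (Finsupp.single 0 d1)) * q + Q, R, ?_, ?_, ?_, ?_, hR⟩
    · rw [pow_succ', mul_assoc, hqr, mul_add, hQR]
      ring
    · exact (hqX.X_mul _ (by simp [wX])).add hQX
    · exact (hqa.X_mul _ (by simp [wa]; omega)).add hQa
    · exact (hqb.X_mul _ (by simp [wb])).add hQb

end GenericDivision

theorem stmt11_general (N d1 d2 : ℕ) (hd1 : 2 ≤ d1) (h12 : d1 ≤ d2)
    (j : ℕ) (hj : j ≤ d2 - d1 + 1)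
    (f g : MvPolynomial (GenVar N) ℤ)
    (hf : f = genericForm N d1 (fun L => Sum.inr (Sum.inl L)))
    (hg : g = genericForm N d2 (fun M => Sum.inr (Sum.inr M))) :
    ∃ q r : MvPolynomial (GenVar N) ℤ,
      (X (Sum.inr (Sum.inl (Finsupp.single 0 d1))) : MvPolynomial (GenVar N) ℤ) ^ j * g
          = q * f + r ∧
      q.IsWeightedHomogeneous (wX N) (d2 - d1) ∧
      q.IsWeightedHomogeneous (wa N) (j - 1) ∧
      q.IsWeightedHomogeneous (wb N) 1 ∧
      r.IsWeightedHomogeneous (wX N) d2 ∧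
      r.IsWeightedHomogeneous (wa N) j ∧
      r.IsWeightedHomogeneous (wb N) 1 ∧
      (∀ m ∈ r.support, m (Sum.inl 0) < d2 + 1 - j) ∧
      (1 ≤ j → ∀ m ∈ r.support,
        1 ≤ m (Sum.inr (Sum.inl (Finsupp.single 0 d1))) ∨
        1 ≤ m (Sum.inr (Sum.inr (Finsupp.single 0 d2)))) := by
  subst hf hg
  rcases Nat.eq_zero_or_pos j with rfl | hj1
  · refine ⟨0, genericForm N d2 (coeffB N), by simp, isWeightedHomogeneous_zero _ _ _,
      isWeightedHomogeneous_zero _ _ _, isWeightedHomogeneous_zero _ _ _,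
      genericForm_isWeightedHomogeneous_wX fun _ => rfl,
      genericForm_isWeightedHomogeneous_of_inl _ (fun _ => rfl) fun _ => rfl,
      genericForm_isWeightedHomogeneous_of_inl _ (fun _ => rfl) fun _ => rfl,
      fun m hm => ?_, by omega⟩
    have := degreeOf_le_iff.mp (degreeOf_genericForm_le (i := 0) fun _ => Sum.inr_ne_inl) m hm
    omega
  obtain ⟨q, r, hqr, hqX, hqa, hqb, hrX, hra, hrb, hrx, hrI⟩ :=
    exists_genericDivision (N := N) (d1 := d1) (d2 := d2) (by omega) hj1 (by omega)
  refine ⟨q, r, hqr, hqX, hqa, hqb, hrX, hra, hrb, fun m hm => ?_, fun _ m hm => ?_⟩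
  · have := degreeOf_le_iff.mp hrx m hm
    omega
  · obtain ⟨i, hi, hmi⟩ := mem_ideal_span_X_image.mp hrI m hm
    rcases hi with rfl | rfl
    · exact Or.inl (Nat.one_le_iff_ne_zero.mpr hmi)
    · exact Or.inr (Nat.one_le_iff_ne_zero.mpr hmi)

theorem stmt11 (N d1 d2 : ℕ) (hN : 1 ≤ N) (hd1 : 2 ≤ d1) (h12 : d1 ≤ d2)
    (j : ℕ) (hj : j ≤ d2 - d1 + 1)
    (f g : MvPolynomial (GenVar N) ℤ)
    (hf : f = genericForm N d1 (fun L => Sum.inr (Sum.inl L)))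
    (hg : g = genericForm N d2 (fun M => Sum.inr (Sum.inr M))) :
    ∃ q r : MvPolynomial (GenVar N) ℤ,
      (X (Sum.inr (Sum.inl (Finsupp.single 0 d1))) : MvPolynomial (GenVar N) ℤ) ^ j * g
          = q * f + r ∧
      q.IsWeightedHomogeneous (wX N) (d2 - d1) ∧
      q.IsWeightedHomogeneous (wa N) (j - 1) ∧
      q.IsWeightedHomogeneous (wb N) 1 ∧
      r.IsWeightedHomogeneous (wX N) d2 ∧
      r.IsWeightedHomogeneous (wa N) j ∧
      r.IsWeightedHomogeneous (wb N) 1 ∧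
      (∀ m ∈ r.support, m (Sum.inl 0) < d2 + 1 - j) ∧
      (1 ≤ j → ∀ m ∈ r.support,
        1 ≤ m (Sum.inr (Sum.inl (Finsupp.single 0 d1))) ∨
        1 ≤ m (Sum.inr (Sum.inr (Finsupp.single 0 d2)))) :=
  stmt11_general N d1 d2 hd1 h12 j hj f g hf hg
end

section
/- Let K be an algebraically closed field, N ≥ 3, c ≥ 2 with c ≤ N−1, and let F_1, …, F_c ∈ K[X_0,…,X_N] be homogeneous quadratic forms defining a smooth complete intersection {F_1 = ⋯ = F_c = 0} of codimension c in P^N_K. Let α_0 ≤ ⋯ ≤ α_N be integers, not all zero, with α_i + α_{N−i} = 0 for all i. Then it is not possible that deg_α(F_i) = 0 for all i ∈ {1,…,c}, where deg_α(F) is the maximal α-degree of a monomial of F. -/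
/-!
Let `P = {j | α j > 0}` and `Q = {j | α j < 0}`; the symmetry `α i + α (N - i) = 0` gives
`|P| = |Q| ≥ 1`. As every monomial of `F i` has nonpositive `α`-weight, each `F i` vanishes on
the coordinate subspace `L = {x | x j = 0 for j ∉ P}`, and so does `∂ F i / ∂ X j` whenever
`α j ≥ 0`. The remaining partials `∂ F i / ∂ X q`, `q ∈ Q`, are linear maps `L → K^Q` between
spaces of the same dimension, so over the algebraically closed field `K` some member of the
pencil spanned by those of `F 0` and `F 1` has a kernel: at some `0 ≠ x ∈ L` the gradients of
`F 0` and `F 1` are linearly dependent, contradicting smoothness.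
-/

open MvPolynomial

theorem LinearMap.exists_smul_add_smul_apply_eq_zero {K V W : Type*} [Field K] [IsAlgClosed K]
    [AddCommGroup V] [Module K V] [FiniteDimensional K V] [Nontrivial V]
    [AddCommGroup W] [Module K W] [FiniteDimensional K W]
    (hdim : Module.finrank K V = Module.finrank K W) (f g : V →ₗ[K] W) :
    ∃ a b : K, (a ≠ 0 ∨ b ≠ 0) ∧ ∃ v ≠ 0, a • f v + b • g v = 0 := by
  by_cases hg : Function.Injective g
  · let e := LinearEquiv.ofBijective g
      ⟨hg, (LinearMap.injective_iff_surjective_of_finrank_eq_finrank hdim).mp hg⟩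
    obtain ⟨t, ht⟩ := Module.End.exists_eigenvalue (e.symm.toLinearMap ∘ₗ f)
    obtain ⟨v, hv⟩ := ht.exists_hasEigenvector
    have hfv : f v = t • g v := by
      have := congrArg e hv.apply_eq_smul
      rwa [LinearMap.comp_apply, LinearEquiv.coe_coe, e.apply_symm_apply, map_smul] at this
    exact ⟨1, -t, .inl one_ne_zero, v, hv.2, by rw [hfv, one_smul, neg_smul, add_neg_cancel]⟩
  · obtain ⟨v, hgv, hv⟩ : ∃ v, g v = 0 ∧ v ≠ 0 := by
      simpa [injective_iff_map_eq_zero] using hg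
    exact ⟨0, 1, .inr one_ne_zero, v, hv, by simp [hgv]⟩

theorem Matrix.eq_zero_of_smul_row_add_smul_row_eq_zero {m n K : Type*} [Field K] [Fintype m]
    [Fintype n] {A : Matrix m n K} (hA : A.rank = Fintype.card m) {i j : m} (hij : i ≠ j) {a b : K}
    (h : a • A.row i + b • A.row j = 0) : a = 0 ∧ b = 0 := by
  have hA' : LinearIndependent K A.row := by
    rw [linearIndependent_iff_card_eq_finrank_span, ← hA, A.rank_eq_finrank_span_row]
    rfl
  exact (LinearIndepOn.pair_iff _ hij).mp (hA'.linearIndepOn _) a b h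

theorem Fin.card_pos_eq_card_neg_of_add_rev_eq_zero {n : ℕ} {α : Fin n → ℤ}
    (hα : ∀ i, α i + α i.rev = 0) :
    Fintype.card {j // 0 < α j} = Fintype.card {j // α j < 0} :=
  Fintype.card_congr <| Fin.revPerm.subtypeEquiv fun j => by have := hα j; simp; omega

theorem Fin.exists_pos_of_add_rev_eq_zero {n : ℕ} {α : Fin n → ℤ} (hα0 : α ≠ 0)
    (hα : ∀ i, α i + α i.rev = 0) : ∃ j, 0 < α j := by
  by_contra! hneg
  exact hα0 <| funext fun j => by have := hα j; have := hneg j; have := hneg j.rev; simp; omega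

namespace MvPolynomial

section

variable {σ K : Type*} [CommSemiring K] {α : σ → ℤ} {x : σ → K}

theorem prod_pow_eq_zero_of_weight_nonpos {d : σ →₀ ℕ} (hd : d ≠ 0) (hw : d.weight α ≤ 0)
    (hx : ∀ j, α j ≤ 0 → x j = 0) : d.prod (fun j e => x j ^ e) = 0 := by
  obtain ⟨j, hj, hαj⟩ : ∃ j ∈ d.support, α j ≤ 0 := by
    by_contra! hpos
    have : 0 < d.weight α :=
      Finset.sum_pos (fun i hi => nsmul_pos (hpos i hi) (Finsupp.mem_support_iff.mp hi))
        (Finsupp.support_nonempty_iff.mpr hd)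
    omega
  exact Finset.prod_eq_zero hj <| show x j ^ d j = 0 by
    rw [hx j hαj, zero_pow (Finsupp.mem_support_iff.mp hj)]

theorem IsHomogeneous.eval_eq_zero_of_weight_nonpos {F : MvPolynomial σ K} {n : ℕ}
    (hF : F.IsHomogeneous n) (hn : n ≠ 0) (hw : ∀ m ∈ F.support, m.weight α ≤ 0)
    (hx : ∀ j, α j ≤ 0 → x j = 0) : eval x F = 0 := by
  rw [F.as_sum, map_sum]
  refine Finset.sum_eq_zero fun m hm => ?_
  have hm0 : m ≠ 0 := by
    rintro rfl
    exact hn (by simpa using (hF (mem_support_iff.mp hm)).symm)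
  rw [eval_monomial, prod_pow_eq_zero_of_weight_nonpos hm0 (hw m hm) hx, mul_zero]

theorem weight_nonpos_of_mem_support_pderiv {F : MvPolynomial σ K}
    (hw : ∀ m ∈ F.support, m.weight α ≤ 0) {l : σ} (hl : 0 ≤ α l) :
    ∀ m ∈ (pderiv l F).support, m.weight α ≤ 0 := by
  intro m hm
  rw [mem_support_iff, coeff_pderiv] at hm
  have := hw _ (mem_support_iff.mpr (left_ne_zero_of_mul hm))
  rw [map_add, Finsupp.weight_single, one_smul] at this
  omega

theorem IsHomogeneous.eval_pderiv_eq_zero_of_weight_nonpos {F : MvPolynomial σ K} {n : ℕ}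
    (hF : F.IsHomogeneous n) (hn : 2 ≤ n) (hw : ∀ m ∈ F.support, m.weight α ≤ 0)
    (hx : ∀ j, α j ≤ 0 → x j = 0) {l : σ} (hl : 0 ≤ α l) : eval x (pderiv l F) = 0 :=
  hF.pderiv.eval_eq_zero_of_weight_nonpos (by omega) (weight_nonpos_of_mem_support_pderiv hw hl) hx

theorem IsHomogeneous.eval_eq_sum_coeff_mul [Fintype σ] {p : MvPolynomial σ K}
    (hp : p.IsHomogeneous 1) (x : σ → K) :
    eval x p = ∑ i, coeff (Finsupp.single i 1) p * x i := by
  conv_lhs => rw [← one_smul ℕ p, ← hp.sum_X_mul_pderiv]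
  rw [map_sum]
  refine Finset.sum_congr rfl fun i _ => ?_
  have hC : pderiv i p = C (coeff 0 (pderiv i p)) :=
    totalDegree_eq_zero_iff_eq_C.mp ((totalDegree_zero_iff_isHomogeneous σ).mpr hp.pderiv)
  rw [eval_mul, eval_X, hC, eval_C, coeff_pderiv, zero_add]
  simp [mul_comm]

/-- The Hessian of `F` at the origin, which is its Hessian everywhere when `F` is quadratic. -/
noncomputable def hessianAtZero (F : MvPolynomial σ K) : Matrix σ σ K :=
  Matrix.of fun i j => coeff (Finsupp.single j 1) (pderiv i F)

theorem IsHomogeneous.eval_pderiv_eq_hessianAtZero_mulVec [Fintype σ] {F : MvPolynomial σ K}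
    (hF : F.IsHomogeneous 2) (x : σ → K) (i : σ) :
    eval x (pderiv i F) = (hessianAtZero F).mulVec x i :=
  hF.pderiv.eval_eq_sum_coeff_mul x

end

section

variable {σ K : Type*} [Field K] [IsAlgClosed K] [Fintype σ]

theorem exists_gradients_dependent_of_weight_nonpos (α : σ → ℤ) (hpos : ∃ j, 0 < α j)
    (hcard : Fintype.card {j // 0 < α j} = Fintype.card {j // α j < 0})
    {F G : MvPolynomial σ K} (hF : F.IsHomogeneous 2) (hG : G.IsHomogeneous 2)
    (hFw : ∀ m ∈ F.support, m.weight α ≤ 0) (hGw : ∀ m ∈ G.support, m.weight α ≤ 0) :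
    ∃ x : σ → K, x ≠ 0 ∧ (∀ j, α j ≤ 0 → x j = 0) ∧ ∃ a b : K, (a ≠ 0 ∨ b ≠ 0) ∧
      ∀ l, a * eval x (pderiv l F) + b * eval x (pderiv l G) = 0 := by
  obtain ⟨j₀, hj₀⟩ := hpos
  have : Nonempty {j // 0 < α j} := ⟨⟨j₀, hj₀⟩⟩
  let extend := Function.ExtendByZero.linearMap K (Subtype.val : {j // 0 < α j} → σ)
  let grad (H : MvPolynomial σ K) : ({j // 0 < α j} → K) →ₗ[K] ({j // α j < 0} → K) :=
    LinearMap.funLeft K K Subtype.val ∘ₗ (hessianAtZero H).mulVecLin ∘ₗ extend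
  obtain ⟨a, b, hab, v, hv, hpencil⟩ := LinearMap.exists_smul_add_smul_apply_eq_zero
    (by simpa [Module.finrank_fintype_fun_eq_card] using hcard) (grad F) (grad G)
  have hx : ∀ j, α j ≤ 0 → extend v j = 0 := fun j hj =>
    Function.extend_apply' _ _ _ (by rintro ⟨p, rfl⟩; exact hj.not_gt p.2)
  refine ⟨extend v, fun h => hv ?_, hx, a, b, hab, fun l => ?_⟩
  · exact Function.extend_injective Subtype.val_injective (0 : σ → K)
      (h.trans extend.map_zero.symm)
  rcases lt_or_ge (α l) 0 with hl | hl
  · simpa [grad, hF.eval_pderiv_eq_hessianAtZero_mulVec, hG.eval_pderiv_eq_hessianAtZero_mulVec]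
      using congrFun hpencil ⟨l, hl⟩
  · rw [hF.eval_pderiv_eq_zero_of_weight_nonpos le_rfl hFw hx hl,
      hG.eval_pderiv_eq_zero_of_weight_nonpos le_rfl hGw hx hl, mul_zero, mul_zero, add_zero]

end

end MvPolynomial

theorem stmt15_general (K : Type*) [Field K] [IsAlgClosed K] (N c : ℕ)
    (hc : 2 ≤ c)
    (F : Fin c → MvPolynomial (Fin (N + 1)) K)
    (hFhom : ∀ i, (F i).IsHomogeneous 2)
    (hsmooth : ∀ x : Fin (N + 1) → K, x ≠ 0 → (∀ i, eval x (F i) = 0) →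
      Matrix.rank (Matrix.of fun (i : Fin c) (j : Fin (N + 1)) =>
        eval x (pderiv j (F i))) = c)
    (α : Fin (N + 1) → ℤ) (hnz : α ≠ 0)
    (hsym : ∀ i : Fin (N + 1), α i + α i.rev = 0) :
    ¬ (∀ i : Fin c,
        (∀ m ∈ (F i).support, (∑ j, α j * (m j : ℤ)) ≤ 0) ∧
        (∃ m ∈ (F i).support, (∑ j, α j * (m j : ℤ)) = 0)) := by
  intro h
  have hw : ∀ i, ∀ m ∈ (F i).support, m.weight α ≤ 0 := fun i m hm => by
    simpa [Finsupp.weight_eq_sum, mul_comm] using (h i).1 m hm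
  let i₀ : Fin c := ⟨0, by omega⟩
  let i₁ : Fin c := ⟨1, by omega⟩
  obtain ⟨x, hx0, hxα, a, b, hab, hdep⟩ := exists_gradients_dependent_of_weight_nonpos α
    (Fin.exists_pos_of_add_rev_eq_zero hnz hsym) (Fin.card_pos_eq_card_neg_of_add_rev_eq_zero hsym)
    (hFhom i₀) (hFhom i₁) (hw i₀) (hw i₁)
  have hrank := hsmooth x hx0 fun i =>
    (hFhom i).eval_eq_zero_of_weight_nonpos two_ne_zero (hw i) hxα
  have := Matrix.eq_zero_of_smul_row_add_smul_row_eq_zero (i := i₀) (j := i₁)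
    (by simpa using hrank) (by simp [i₀, i₁, Fin.ext_iff]) (funext hdep)
  exact hab.elim (· this.1) (· this.2)

theorem stmt15 (K : Type*) [Field K] [IsAlgClosed K] (N c : ℕ)
    (hN : 3 ≤ N) (hc : 2 ≤ c) (hcN : c ≤ N - 1)
    (F : Fin c → MvPolynomial (Fin (N + 1)) K)
    (hF0 : ∀ i, F i ≠ 0)
    (hFhom : ∀ i, (F i).IsHomogeneous 2)
    (hsmooth : ∀ x : Fin (N + 1) → K, x ≠ 0 → (∀ i, eval x (F i) = 0) →
      Matrix.rank (Matrix.of fun (i : Fin c) (j : Fin (N + 1)) =>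
        eval x (pderiv j (F i))) = c)
    (α : Fin (N + 1) → ℤ) (hmono : Monotone α) (hnz : α ≠ 0)
    (hsym : ∀ i : Fin (N + 1), α i + α i.rev = 0) :
    ¬ (∀ i : Fin c,
        (∀ m ∈ (F i).support, (∑ j, α j * (m j : ℤ)) ≤ 0) ∧
        (∃ m ∈ (F i).support, (∑ j, α j * (m j : ℤ)) = 0)) :=
  stmt15_general K N c hc F hFhom hsmooth α hnz hsym
end
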